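/- For every real β > 0 and every ρ ∈ [0,1], the tanh-based Heaviside projection at threshold η = 1 satisfies h(ρ,β,1) = 1 − tanh(β(1−ρ))/tanh(β) ≤ ρ, with strict inequality whenever ρ ∈ (0,1), and with equality at ρ = 0 and ρ = 1. -/

import Mathlib

/-- The tanh-based Heaviside projection. -/
noncomputable def heavisideProj (ρ β η : ℝ) : ℝ :=
  (Real.tanh (β * η) + Real.tanh (β * (ρ - η))) /
    (Real.tanh (β * η) + Real.tanh (β * (1 - η)))

/-!
For `η = 1` the projection is `h(ρ) = 1 - tanh (β (1 - ρ)) / tanh β`, so `h(ρ) ≤ ρ` says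
`(1 - ρ) tanh β ≤ tanh ((1 - ρ) β)`: the chord inequality of a concave function vanishing at `0`.
Since `tanh' = 1 / cosh²` is strictly decreasing on `[0, ∞)`, `tanh` is strictly concave there,
which also gives strictness for `0 < 1 - ρ < 1`.
-/

open Real Set

namespace Real

theorem hasDerivAt_tanh (x : ℝ) : HasDerivAt tanh (1 / cosh x ^ 2) x := by
  have h := (hasDerivAt_sinh x).div (hasDerivAt_cosh x) (cosh_pos x).ne'
  rwa [show sinh / cosh = tanh from funext fun y => (tanh_eq_sinh_div_cosh y).symm,
    show cosh x * cosh x - sinh x * sinh x = 1 by rw [← cosh_sq_sub_sinh_sq x]; ring] at h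

theorem continuous_tanh : Continuous tanh :=
  continuous_iff_continuousAt.2 fun x => (hasDerivAt_tanh x).continuousAt

theorem tanh_pos {x : ℝ} (hx : 0 < x) : 0 < tanh x := by
  rw [tanh_eq_sinh_div_cosh]
  exact div_pos (sinh_pos_iff.2 hx) (cosh_pos x)

theorem strictConcaveOn_tanh : StrictConcaveOn ℝ (Ici 0) tanh := by
  refine StrictAntiOn.strictConcaveOn_of_deriv (convex_Ici 0) continuous_tanh.continuousOn ?_
  intro a ha b hb hab
  rw [interior_Ici, mem_Ioi] at ha hb
  have hcosh : cosh a < cosh b := by rwa [cosh_lt_cosh, abs_of_pos ha, abs_of_pos hb]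
  simp only [(hasDerivAt_tanh _).deriv]
  gcongr

end Real

theorem ConcaveOn.mul_le_map_mul {f : ℝ → ℝ} (hf : ConcaveOn ℝ (Ici 0) f) (h0 : f 0 = 0)
    {t x : ℝ} (ht0 : 0 ≤ t) (ht1 : t ≤ 1) (hx : 0 ≤ x) : t * f x ≤ f (t * x) := by
  simpa [h0] using hf.2 (mem_Ici.2 le_rfl) (mem_Ici.2 hx) (sub_nonneg.2 ht1) ht0
    (sub_add_cancel 1 t)

theorem StrictConcaveOn.mul_lt_map_mul {f : ℝ → ℝ} (hf : StrictConcaveOn ℝ (Ici 0) f)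
    (h0 : f 0 = 0) {t x : ℝ} (ht0 : 0 < t) (ht1 : t < 1) (hx : 0 < x) :
    t * f x < f (t * x) := by
  simpa [h0] using hf.2 (mem_Ici.2 le_rfl) (mem_Ici.2 hx.le) hx.ne (sub_pos.2 ht1) ht0
    (sub_add_cancel 1 t)

theorem heavisideProj_one {β : ℝ} (hβ : β ≠ 0) (ρ : ℝ) :
    heavisideProj ρ β 1 = 1 - tanh (β * (1 - ρ)) / tanh β := by
  have htanh : tanh β ≠ 0 := by simpa using tanh_injective.ne hβ
  rw [heavisideProj, show β * (ρ - 1) = -(β * (1 - ρ)) by ring, tanh_neg]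
  simp only [mul_one, sub_self, mul_zero, tanh_zero, add_zero, ← sub_eq_add_neg, sub_div,
    div_self htanh]

theorem heaviside_eta_one (β ρ : ℝ) (hβ : 0 < β) (hρ : ρ ∈ Set.Icc (0:ℝ) 1) :
    heavisideProj ρ β 1 = 1 - Real.tanh (β * (1 - ρ)) / Real.tanh β ∧
      heavisideProj ρ β 1 ≤ ρ ∧
      (ρ ∈ Set.Ioo (0:ℝ) 1 → heavisideProj ρ β 1 < ρ) ∧
      heavisideProj 0 β 1 = 0 ∧
      heavisideProj 1 β 1 = 1 := by
  have htanh : 0 < tanh β := tanh_pos hβ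
  refine ⟨heavisideProj_one hβ.ne' ρ, ?_, fun hρ' => ?_, ?_, ?_⟩ <;>
    rw [heavisideProj_one hβ.ne']
  · rw [sub_le_comm, le_div_iff₀ htanh, mul_comm β]
    exact strictConcaveOn_tanh.concaveOn.mul_le_map_mul tanh_zero
      (sub_nonneg.2 hρ.2) (sub_le_self 1 hρ.1) hβ.le
  · rw [sub_lt_comm, lt_div_iff₀ htanh, mul_comm β]
    exact strictConcaveOn_tanh.mul_lt_map_mul tanh_zero
      (sub_pos.2 hρ'.2) (sub_lt_self 1 hρ'.1) hβ
  · simp [htanh.ne']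
  · simp
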